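/- M_{ℵ₀} holds in ZFC: for every countable family 𝒞 of closed subsets of ω₁ there is a club C ⊆ ω₁ such that for every D ∈ 𝒞 and every δ ∈ C there is α < δ with either (C ∩ δ) \ α ⊆ D or ((C ∩ δ) \ α) ∩ D = ∅. -/

import Mathlib

/-!
A closed set `D ⊆ ω₁` is either unbounded, and then a club, or bounded by some `α < ω₁`, and then
disjoint from the club `(α, ω₁)`. Intersecting these clubs over `D ∈ 𝒞`, together with `(0, ω₁)`,
gives a club `C` that lies inside or outside each `D ∈ 𝒞`, so `α = 0` works for every `δ ∈ C`.
The only real work is that a countable intersection of clubs is a club, by the usual diagonal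
construction of an `ω`-sequence meeting every club cofinally often.
-/

noncomputable def omega1 : Ordinal.{0} := (Cardinal.aleph 1).ord

def IsClubOmega1 (C : Set Ordinal) : Prop :=
  C ⊆ Set.Iio omega1 ∧
    (∀ δ, δ < omega1 → δ ≠ 0 → sSup (C ∩ Set.Iio δ) = δ → δ ∈ C) ∧
    ∀ α, α < omega1 → ∃ β ∈ C, α < β

/-- `D` is closed (in the order topology) as a subset of `β`. -/
def IsClosedIn (D : Set Ordinal) (β : Ordinal) : Prop :=
  ∀ δ, δ < β → δ ≠ 0 → sSup (D ∩ Set.Iio δ) = δ → δ ∈ D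

open Set

lemma omega1_pos : 0 < omega1 :=
  Cardinal.ord_pos.2 (Cardinal.aleph_pos 1)

lemma add_one_lt_omega1 {a : Ordinal} (ha : a < omega1) : a + 1 < omega1 := by
  rw [← Order.succ_eq_add_one]
  exact (Cardinal.isSuccLimit_ord (Cardinal.aleph0_le_aleph 1)).succ_lt ha

lemma iSup_lt_omega1 {ι : Type} [Countable ι] {f : ι → Ordinal.{0}} (hf : ∀ i, f i < omega1) :
    ⨆ i, f i < omega1 :=
  Ordinal.iSup_lt_of_lt_cof (by
    rw [omega1, Cardinal.isRegular_aleph_one.cof_ord]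
    exact Cardinal.mk_le_aleph0.trans_lt Cardinal.aleph0_lt_aleph_one) hf

lemma sSup_inter_Iio_le (S : Set Ordinal) (δ : Ordinal) : sSup (S ∩ Iio δ) ≤ δ :=
  csSup_le' fun _ hy => hy.2.le

lemma sSup_inter_Iio_eq_of_subset {S T : Set Ordinal} {δ : Ordinal} (hST : S ⊆ T)
    (hS : sSup (S ∩ Iio δ) = δ) : sSup (T ∩ Iio δ) = δ :=
  (sSup_inter_Iio_le T δ).antisymm <|
    hS.ge.trans (csSup_le_csSup' ⟨δ, fun _ hy => hy.2.le⟩ (inter_subset_inter_left _ hST))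

lemma sSup_inter_Iio_eq_of_cofinal {S : Set Ordinal} {δ : Ordinal}
    (hS : ∀ γ < δ, ∃ y ∈ S, γ < y ∧ y < δ) : sSup (S ∩ Iio δ) = δ := by
  refine (sSup_inter_Iio_le S δ).antisymm (le_of_forall_lt fun γ hγ => ?_)
  obtain ⟨y, hyS, hγy, hyδ⟩ := hS γ hγ
  exact hγy.trans_le (le_csSup ⟨δ, fun _ hz => hz.2.le⟩ ⟨hyS, hyδ⟩)

lemma isClubOmega1_Ioo {β : Ordinal} (hβ : β < omega1) : IsClubOmega1 (Ioo β omega1) := by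
  refine ⟨fun _ hx => hx.2, fun δ hδ hδ0 hsup => ⟨?_, hδ⟩, fun α hα => ?_⟩
  · by_contra hle
    have hempty : Ioo β omega1 ∩ Iio δ = ∅ :=
      eq_empty_of_forall_notMem fun x hx => hle (hx.1.1.trans hx.2)
    rw [hempty, csSup_empty] at hsup
    exact hδ0 hsup.symm
  · exact ⟨max α β + 1, ⟨(le_max_right α β).trans_lt (lt_add_one _),
      add_one_lt_omega1 (max_lt hα hβ)⟩, (le_max_left α β).trans_lt (lt_add_one _)⟩

/-- The diagonal step: interleaving the sets along `Nat.unpair`, the supremum of an increasing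
`ω`-sequence is a limit point of every `F n`. -/
lemma exists_lt_forall_cofinal (F : ℕ → Set Ordinal) (hsub : ∀ n, F n ⊆ Iio omega1)
    (hunb : ∀ n, ∀ a < omega1, ∃ b ∈ F n, a < b) {α : Ordinal} (hα : α < omega1) :
    ∃ δ < omega1, α < δ ∧ ∀ n, ∀ γ < δ, ∃ y ∈ F n, γ < y ∧ y < δ := by
  have hnxt : ∀ n a, ∃ b, a < omega1 → b ∈ F n ∧ a < b := fun n a => by
    by_cases ha : a < omega1
    · obtain ⟨b, hb, hab⟩ := hunb n a ha
      exact ⟨b, fun _ => ⟨hb, hab⟩⟩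
    · exact ⟨0, fun h => absurd h ha⟩
  choose nxt hnxt using hnxt
  obtain ⟨x, hx0, hxs⟩ : ∃ x : ℕ → Ordinal, x 0 = α ∧ ∀ k, x (k + 1) = nxt k.unpair.1 (x k) :=
    ⟨fun k => Nat.rec α (fun k xk => nxt k.unpair.1 xk) k, rfl, fun _ => rfl⟩
  have hxlt : ∀ k, x k < omega1 := by
    intro k
    induction k with
    | zero => rwa [hx0]
    | succ k ih => rw [hxs]; exact hsub _ (hnxt _ _ ih).1
  have hmono : StrictMono x :=
    strictMono_nat_of_lt_succ fun k => by rw [hxs]; exact (hnxt _ _ (hxlt k)).2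
  have hlt : ∀ k, x k < ⨆ k, x k := fun k =>
    (hmono k.lt_succ_self).trans_le (Ordinal.le_iSup x (k + 1))
  refine ⟨⨆ k, x k, iSup_lt_omega1 hxlt, hx0 ▸ hlt 0, fun n γ hγ => ?_⟩
  obtain ⟨k, hγk⟩ := Ordinal.lt_iSup_iff.1 hγ
  refine ⟨x (Nat.pair n k + 1), ?_, ?_, hlt _⟩
  · rw [hxs, Nat.unpair_pair]
    exact (hnxt n _ (hxlt _)).1
  · exact hγk.trans (hmono (Nat.lt_succ_of_le (Nat.right_le_pair n k)))

lemma IsClubOmega1.iInter {ι : Type*} [Countable ι] [Nonempty ι] {F : ι → Set Ordinal}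
    (hF : ∀ i, IsClubOmega1 (F i)) : IsClubOmega1 (⋂ i, F i) := by
  obtain ⟨e, he⟩ := exists_surjective_nat ι
  refine ⟨(iInter_subset F (e 0)).trans (hF _).1, fun δ hδ hδ0 hsup => ?_, fun α hα => ?_⟩
  · exact mem_iInter.2 fun i => (hF i).2.1 δ hδ hδ0
      (sSup_inter_Iio_eq_of_subset (iInter_subset F i) hsup)
  · obtain ⟨δ, hδ, hαδ, hcof⟩ := exists_lt_forall_cofinal (F ∘ e) (fun n => (hF _).1)
      (fun n => (hF _).2.2) hα
    refine ⟨δ, mem_iInter.2 fun i => ?_, hαδ⟩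
    obtain ⟨n, rfl⟩ := he i
    exact (hF _).2.1 δ hδ (hαδ.trans_le' (zero_le (a := α))).ne'
      (sSup_inter_Iio_eq_of_cofinal (hcof n))

lemma IsClosedIn.exists_isClubOmega1_subset_or_disjoint {D : Set Ordinal}
    (hD : D ⊆ Iio omega1) (hcl : IsClosedIn D omega1) :
    ∃ E, IsClubOmega1 E ∧ (E ⊆ D ∨ Disjoint E D) := by
  by_cases hunb : ∀ α < omega1, ∃ β ∈ D, α < β
  · exact ⟨D, ⟨hD, hcl, hunb⟩, Or.inl subset_rfl⟩
  · push Not at hunb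
    obtain ⟨α, hα, hle⟩ := hunb
    exact ⟨Ioo α omega1, isClubOmega1_Ioo hα,
      Or.inr (disjoint_left.2 fun x hx hxD => (hle x hxD).not_gt hx.1)⟩

theorem stmt10 (𝒞 : Set (Set Ordinal)) (hcnt : 𝒞.Countable)
    (hcl : ∀ D ∈ 𝒞, D ⊆ Set.Iio omega1 ∧ IsClosedIn D omega1) :
    ∃ C, IsClubOmega1 C ∧ ∀ D ∈ 𝒞, ∀ δ ∈ C,
      ∃ α < δ, ((C ∩ Set.Iio δ) \ Set.Iio α ⊆ D ∨
        ((C ∩ Set.Iio δ) \ Set.Iio α) ∩ D = ∅) := by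
  have := hcnt.to_subtype
  choose E hEclub hE using fun D : 𝒞 =>
    (hcl D D.2).2.exists_isClubOmega1_subset_or_disjoint (hcl D D.2).1
  let F : Option 𝒞 → Set Ordinal := fun i => i.elim (Ioo 0 omega1) E
  have hFclub : ∀ i, IsClubOmega1 (F i)
    | none => isClubOmega1_Ioo omega1_pos
    | some D => hEclub D
  refine ⟨⋂ i, F i, IsClubOmega1.iInter hFclub, fun D hD δ hδ => ⟨0, ?_, ?_⟩⟩
  · exact (mem_iInter.1 hδ none).1
  · have hsubE : ((⋂ i, F i) ∩ Iio δ) \ Iio 0 ⊆ E ⟨D, hD⟩ :=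
      fun x hx => mem_iInter.1 hx.1.1 (some ⟨D, hD⟩)
    exact (hE ⟨D, hD⟩).imp hsubE.trans fun hdisj => (hdisj.mono_left hsubE).inter_eq
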